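/- arXiv:1411.0168 — 6 statements merged into one kernel-verified Lean document; each statement's English description precedes it below -/
import Mathlib

section
/- The pairwise 'beats' relation induced by a consistent choice function is transitive: if F [a, b] = b and F [b, c] = c, then F [a, c] = c, for pairwise distinct a, b, c. -/
/-- `a` occurs (strictly) before `b` in the list `l`. -/
def Before {α : Type*} (a b : α) (l : List α) : Prop :=
  ∃ l₁ l₂ l₃ : List α, l = l₁ ++ a :: (l₂ ++ b :: l₃)

/-- A consistent choice function on lists. -/
structure ConsistentF {α : Type*} (F : List α → Option α) : Prop where
  empty : F [] = none
  mem : ∀ l : List α, l.Nodup → l ≠ [] → ∃ x ∈ l, F l = some x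
  cons : ∀ l₁ l₂ : List α, l₁.Nodup → l₂.Nodup → ∀ a b : α, a ≠ b →
    Before a b l₁ → F l₁ = some a → Before a b l₂ → F l₂ ≠ some b

theorem stmt1 {α : Type*} (F : List α → Option α) (hF : ConsistentF F)
    (a b c : α) (hab : a ≠ b) (hbc : b ≠ c) (hac : a ≠ c)
    (h1 : F [a, b] = some b) (h2 : F [b, c] = some c) :
    F [a, c] = some c := by
  have nd3 : ([a, b, c] : List α).Nodup := by simp [hab, hbc, hac]
  have ndab : ([a, b] : List α).Nodup := by simp [hab]
  have ndbc : ([b, c] : List α).Nodup := by simp [hbc]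
  have ndac : ([a, c] : List α).Nodup := by simp [hac]
  have Bab3 : Before a b [a, b, c] := ⟨[], [], [c], rfl⟩
  have Bbc3 : Before b c [a, b, c] := ⟨[a], [], [], rfl⟩
  have Bac3 : Before a c [a, b, c] := ⟨[], [b], [], rfl⟩
  have Bab : Before a b [a, b] := ⟨[], [], [], rfl⟩
  have Bbc : Before b c [b, c] := ⟨[], [], [], rfl⟩
  have Bac : Before a c [a, c] := ⟨[], [], [], rfl⟩
  obtain ⟨x, hx, hFx⟩ := hF.mem [a, b, c] nd3 (by simp)
  simp only [List.mem_cons, List.mem_singleton, List.not_mem_nil, or_false] at hx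
  have h3 : F [a, b, c] = some c := by
    rcases hx with h | h | h <;> rw [h] at hFx
    · exact absurd h1 (hF.cons [a, b, c] [a, b] nd3 ndab a b hab Bab3 hFx Bab)
    · exact absurd h2 (hF.cons [a, b, c] [b, c] nd3 ndbc b c hbc Bbc3 hFx Bbc)
    · exact hFx
  obtain ⟨y, hy, hFy⟩ := hF.mem [a, c] ndac (by simp)
  simp only [List.mem_cons, List.mem_singleton, List.not_mem_nil, or_false] at hy
  rcases hy with h | h <;> rw [h] at hFy
  · exact absurd h3 (hF.cons [a, c] [a, b, c] ndac nd3 a c hac Bac hFy Bac3)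
  · exact hFy
end

section
/- For pairwise distinct items s, f, r, g, if F [s, f] = f, F [f, g] = g, and F [r, g] = r, then F [s, f, r, g] = r, and consequently F [s, r] = r. -/
theorem stmt2 {α : Type*} (F : List α → Option α) (hF : ConsistentF F)
    (s f r g : α)
    (hsf : s ≠ f) (hsr : s ≠ r) (hsg : s ≠ g) (hfr : f ≠ r) (hfg : f ≠ g) (hrg : r ≠ g)
    (h1 : F [s, f] = some f) (h2 : F [f, g] = some g) (h3 : F [r, g] = some r) :
    F [s, f, r, g] = some r ∧ F [s, r] = some r := by
  have hL : ([s, f, r, g] : List α).Nodup := by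
    simp [hsf, hsr, hsg, hfr, hfg, hrg]
  have hsf' : ([s, f] : List α).Nodup := by simp [hsf]
  have hfg' : ([f, g] : List α).Nodup := by simp [hfg]
  have hrg' : ([r, g] : List α).Nodup := by simp [hrg]
  have hsr' : ([s, r] : List α).Nodup := by simp [hsr]
  obtain ⟨x, hx, hFx⟩ := hF.mem [s, f, r, g] hL (by simp)
  have hxr : x = r := by
    simp only [List.mem_cons, List.mem_singleton, List.not_mem_nil, or_false] at hx
    rcases hx with rfl | rfl | rfl | rfl
    · exact absurd h1 (hF.cons [x, f, r, g] [x, f] hL hsf' x f hsf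
        ⟨[], [], [r, g], rfl⟩ hFx ⟨[], [], [], rfl⟩)
    · exact absurd h2 (hF.cons [s, x, r, g] [x, g] hL hfg' x g hfg
        ⟨[s], [r], [], rfl⟩ hFx ⟨[], [], [], rfl⟩)
    · rfl
    · exact absurd hFx (hF.cons [r, x] [s, f, r, x] hrg' hL r x hrg
        ⟨[], [], [], rfl⟩ h3 ⟨[s, f], [], [], rfl⟩)
  rw [hxr] at hFx
  refine ⟨hFx, ?_⟩
  obtain ⟨y, hy, hFy⟩ := hF.mem [s, r] hsr' (by simp)
  simp only [List.mem_cons, List.mem_singleton, List.not_mem_nil, or_false] at hy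
  rcases hy with rfl | rfl
  · exact absurd hFx (hF.cons [y, r] [y, f, r, g] hsr' hL y r hsr
      ⟨[], [], [], rfl⟩ hFy ⟨[], [f], [g], rfl⟩)
  · exact hFy
end

section
/- For pairwise distinct items r, f, v, g, if F [r, f] = f, F [r, v] = r, and F [f, g] = g, then F [r, f, v, g] = g, and consequently F [v, g] = g. -/
theorem stmt3 {α : Type*} (F : List α → Option α) (hF : ConsistentF F)
    (r f v g : α)
    (hrf : r ≠ f) (hrv : r ≠ v) (hrg : r ≠ g) (hfv : f ≠ v) (hfg : f ≠ g) (hvg : v ≠ g)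
    (h1 : F [r, f] = some f) (h2 : F [r, v] = some r) (h3 : F [f, g] = some g) :
    F [r, f, v, g] = some g ∧ F [v, g] = some g := by
  have ndL : ([r, f, v, g] : List α).Nodup := by
    simp [List.nodup_cons, hrf, hrv, hrg, hfv, hfg, hvg]
  have ndrf : ([r, f] : List α).Nodup := by simp [hrf]
  have ndrv : ([r, v] : List α).Nodup := by simp [hrv]
  have ndfg : ([f, g] : List α).Nodup := by simp [hfg]
  have ndvg : ([v, g] : List α).Nodup := by simp [hvg]
  have brfL : Before r f [r, f, v, g] := ⟨[], [], [v, g], rfl⟩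
  have bfgL : Before f g [r, f, v, g] := ⟨[r], [v], [], rfl⟩
  have brvL : Before r v [r, f, v, g] := ⟨[], [f], [g], rfl⟩
  have bvgL : Before v g [r, f, v, g] := ⟨[r, f], [], [], rfl⟩
  have brf : Before r f [r, f] := ⟨[], [], [], rfl⟩
  have bfg : Before f g [f, g] := ⟨[], [], [], rfl⟩
  have brv : Before r v [r, v] := ⟨[], [], [], rfl⟩
  have bvg : Before v g [v, g] := ⟨[], [], [], rfl⟩
  obtain ⟨x, hxmem, hx⟩ := hF.mem [r, f, v, g] ndL (by simp)
  have hL : F [r, f, v, g] = some g := by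
    simp only [List.mem_cons, List.mem_singleton, List.not_mem_nil, or_false] at hxmem
    rcases hxmem with rfl | rfl | rfl | rfl
    · exact absurd h1 (hF.cons [x, f, v, g] [x, f] ndL ndrf x f hrf brfL hx brf)
    · exact absurd h3 (hF.cons [r, x, v, g] [x, g] ndL ndfg x g hfg bfgL hx bfg)
    · exact absurd hx (hF.cons [r, x] [r, f, x, g] ndrv ndL r x hrv brv h2 brvL)
    · exact hx
  refine ⟨hL, ?_⟩
  obtain ⟨y, hymem, hy⟩ := hF.mem [v, g] ndvg (by simp)
  simp only [List.mem_cons, List.mem_singleton, List.not_mem_nil, or_false] at hymem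
  rcases hymem with rfl | rfl
  · exact absurd hL (hF.cons [y, g] [r, f, y, g] ndvg ndL y g hvg bvg hy bvgL)
  · exact hy
end

section
/- Removing an element from a list state does not flip a pairwise-determined removal: if the state A = L ++ [s'] ++ M ++ [s''] ++ R is duplicate-free, s is an element of L, and F A = some s', then F (A.erase s) ≠ some s''. -/
theorem stmt7 {α : Type*} [DecidableEq α] (F : List α → Option α) (hF : ConsistentF F)
    (s s' s'' : α) (h1 : s ≠ s') (h2 : s ≠ s'') (h3 : s' ≠ s'')
    (L M R : List α) (A : List α) (hA : A = L ++ [s'] ++ M ++ [s''] ++ R)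
    (hnd : A.Nodup) (hs : s ∈ L) (hFA : F A = some s') :
    F (A.erase s) ≠ some s'' := by
  have hA' : A = L ++ s' :: (M ++ s'' :: R) := by simp [hA]
  have herase : A.erase s = L.erase s ++ s' :: (M ++ s'' :: R) := by
    rw [hA', List.erase_append_left _ hs]
  apply hF.cons A (A.erase s) hnd (hnd.erase s) s' s'' h3
  · exact ⟨L, M, R, hA'⟩
  · exact hFA
  · exact ⟨L.erase s, M, R, herase⟩
end

section
/- Stuttering invariance of consistent-set executions: let E be a sequence of operations (insert x or remove) executed on a list state, where remove deletes F(state) from the state. Suppose item s is inserted at some step and later removed by a remove that returns s. Let E' be E with that insert and that remove deleted. Then every other remove operation returns the same item in E' as it does in E. -/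
/-- Operations on a consistent set. -/
inductive Op (α : Type*) where
  | ins : α → Op α
  | rem : Op α

/-- Apply one operation to the list state: insert appends, remove erases `F state`. -/
def applyOp {α : Type*} [DecidableEq α] (F : List α → Option α) (s : List α) : Op α → List α
  | .ins x => s ++ [x]
  | .rem => match F s with | none => s | some x => s.erase x

/-- The state after executing the first `k` operations of `E`, starting from `[]`. -/
def stateAt {α : Type*} [DecidableEq α] (F : List α → Option α) (E : List (Op α)) (k : ℕ) :
    List α :=
  (E.take k).foldl (applyOp F) []

/-- The items inserted during an execution, in order. -/
def insertedItems {α : Type*} : List (Op α) → List α :=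
  List.filterMap fun o => match o with | .ins x => some x | .rem => none

section Before

variable {α : Type*} {a b s : α} {l : List α}

theorem before_iff_sublist : Before a b l ↔ [a, b].Sublist l := by
  constructor
  · rintro ⟨l₁, l₂, l₃, rfl⟩
    exact (List.cons_sublist_cons.2 (List.singleton_sublist.2 (by simp))).trans
      (List.sublist_append_right l₁ _)
  · intro h
    obtain ⟨r₁, r₂, rfl, ha, hb⟩ := List.cons_sublist_iff.1 h
    obtain ⟨p, q, rfl⟩ := List.append_of_mem ha
    obtain ⟨u, v, rfl⟩ := List.append_of_mem (List.singleton_sublist.1 hb)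
    exact ⟨p, q ++ u, v, by simp⟩

theorem Before.erase [DecidableEq α] (h : Before a b l) (ha : a ≠ s) (hb : b ≠ s) :
    Before a b (l.erase s) := by
  rw [before_iff_sublist] at h ⊢
  simpa [List.erase_of_not_mem, ha.symm, hb.symm] using h.erase s

theorem before_or_before (ha : a ∈ l) (hb : b ∈ l) (hab : a ≠ b) :
    Before a b l ∨ Before b a l := by
  obtain ⟨p, q, rfl⟩ := List.append_of_mem ha
  rcases List.mem_append.1 hb with hp | hq
  · obtain ⟨u, v, rfl⟩ := List.append_of_mem hp
    exact .inr ⟨u, v, q, by simp⟩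
  · obtain ⟨u, v, rfl⟩ := List.append_of_mem ((List.mem_cons.1 hq).resolve_left hab.symm)
    exact .inl ⟨p, u, v, rfl⟩

end Before

namespace ConsistentF

variable {α : Type*} {F : List α → Option α} {l : List α} {a s : α}

theorem mem_of_eq_some (hF : ConsistentF F) (hl : l.Nodup) (h : F l = some a) : a ∈ l := by
  rcases eq_or_ne l [] with rfl | hne
  · simp [hF.empty] at h
  · obtain ⟨x, hx, hFx⟩ := hF.mem l hl hne
    exact Option.some_injective _ (hFx.symm.trans h) ▸ hx

variable [DecidableEq α]

theorem apply_erase_of_eq_some (hF : ConsistentF F) (hl : l.Nodup) (h : F l = some a)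
    (has : a ≠ s) : F (l.erase s) = some a := by
  have hl' : (l.erase s).Nodup := hl.erase s
  have ha : a ∈ l.erase s := (List.mem_erase_of_ne has).2 (hF.mem_of_eq_some hl h)
  obtain ⟨b, hb, hFb⟩ := hF.mem _ hl' (List.ne_nil_of_mem ha)
  rcases eq_or_ne b a with rfl | hba
  · exact hFb
  have hbs : b ≠ s := fun hbs => hl.not_mem_erase (hbs ▸ hb)
  rcases before_or_before (hF.mem_of_eq_some hl h) (List.mem_of_mem_erase hb) hba.symm with
    hab | hba'
  · exact absurd hFb (hF.cons l _ hl hl' a b hba.symm hab h (hab.erase has hbs))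
  · exact absurd h (hF.cons _ l hl' hl b a hba (hba'.erase hbs has) hFb hba')

theorem apply_erase (hF : ConsistentF F) (hl : l.Nodup) (hs : F l ≠ some s) :
    F (l.erase s) = F l := by
  rcases hFl : F l with _ | a
  · rcases eq_or_ne l [] with rfl | hne
    · simpa using hFl
    · obtain ⟨x, -, hx⟩ := hF.mem l hl hne
      simp [hx] at hFl
  · exact hF.apply_erase_of_eq_some hl hFl (fun h => hs (h ▸ hFl))

end ConsistentF

theorem drop_eraseIdx_eraseIdx {β : Type*} (l : List β) {i j : ℕ} (hij : i < j) :
    ((l.eraseIdx j).eraseIdx i).drop (j - 1) = l.drop (j + 1) := by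
  refine List.ext_getElem? fun t => ?_
  rw [List.getElem?_drop, List.getElem?_drop, List.getElem?_eraseIdx_of_ge (by omega),
    List.getElem?_eraseIdx_of_ge (by omega)]
  congr 1
  omega

section Execution

variable {α : Type*}

theorem insertedItems_eq_of_getElem? {E : List (Op α)} {i : ℕ} {s : α}
    (hi : E[i]? = some (.ins s)) :
    insertedItems E = insertedItems (E.take i) ++ s :: insertedItems (E.drop (i + 1)) := by
  obtain ⟨hlen, hEi⟩ := List.getElem?_eq_some_iff.1 hi
  conv_lhs => rw [← List.take_append_drop i E, ← List.getElem_cons_drop hlen, hEi]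
  simp [insertedItems, List.filterMap_append]

theorem not_mem_insertedItems_take_append_drop {E : List (Op α)} {i : ℕ} {s : α}
    (hnd : (insertedItems E).Nodup) (hi : E[i]? = some (.ins s)) :
    s ∉ insertedItems (E.take i) ++ insertedItems (E.drop (i + 1)) := by
  rw [insertedItems_eq_of_getElem? hi, List.nodup_middle] at hnd
  exact (List.nodup_cons.1 hnd).1

variable [DecidableEq α] {F : List α → Option α}

theorem foldl_applyOp_sublist (F : List α → Option α) :
    ∀ (L : List (Op α)) (l : List α), (L.foldl (applyOp F) l).Sublist (l ++ insertedItems L)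
  | [], l => by simp [insertedItems]
  | .ins x :: L, l => by
    simpa [applyOp, insertedItems] using foldl_applyOp_sublist F L (l ++ [x])
  | .rem :: L, l => by
    have hrem : (applyOp F l .rem).Sublist l := by
      simp only [applyOp]
      split
      · exact .refl l
      · exact List.erase_sublist
    simpa [insertedItems] using
      (foldl_applyOp_sublist F L _).trans (hrem.append_right (insertedItems L))

theorem apply_ne_of_mem_applyOp_rem {l : List α} {s : α} (hl : l.Nodup)
    (hs : s ∈ applyOp F l .rem) : F l ≠ some s := by
  intro h
  simp only [applyOp, h] at hs
  exact hl.not_mem_erase hs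

theorem ConsistentF.applyOp_erase (hF : ConsistentF F) {l : List α} {s : α} {op : Op α}
    (hl : l.Nodup) (hop : op ≠ .ins s) (hs : s ∈ applyOp F l op) :
    applyOp F (l.erase s) op = (applyOp F l op).erase s := by
  cases op with
  | ins x =>
    have hxs : x ≠ s := fun h => hop (h ▸ rfl)
    have hsl : s ∈ l := by simpa [applyOp, hxs.symm] using hs
    simp [applyOp, List.erase_append_left _ hsl]
  | rem =>
    have hFs := apply_ne_of_mem_applyOp_rem hl hs
    simp only [applyOp, hF.apply_erase hl hFs]
    split
    · rfl
    · exact List.erase_comm _ _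

theorem stateAt_add_one_of_getElem? {E : List (Op α)} {k : ℕ} {op : Op α}
    (h : E[k]? = some op) : stateAt F E (k + 1) = applyOp F (stateAt F E k) op := by
  rw [stateAt, List.take_add_one, h, List.foldl_append, stateAt]
  rfl

theorem stateAt_add_eq_of_drop_eq {E E' : List (Op α)} {m m' : ℕ}
    (h : stateAt F E m = stateAt F E' m') (hdrop : E.drop m = E'.drop m') (t : ℕ) :
    stateAt F E (m + t) = stateAt F E' (m' + t) := by
  simp only [stateAt] at h ⊢
  rw [List.take_add, List.take_add, List.foldl_append, List.foldl_append, h, hdrop]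

theorem stateAt_eraseIdx_of_le (E : List (Op α)) {m n : ℕ} (h : m ≤ n) :
    stateAt F (E.eraseIdx n) m = stateAt F E m := by
  rw [stateAt, List.take_eraseIdx_eq_take_of_le E m n h, stateAt]

theorem stateAt_sublist_insertedItems_take (E : List (Op α)) (k : ℕ) :
    (stateAt F E k).Sublist (insertedItems (E.take k)) := by
  simpa [stateAt] using foldl_applyOp_sublist F (E.take k) []

theorem nodup_stateAt {E : List (Op α)} (hnd : (insertedItems E).Nodup) (k : ℕ) :
    (stateAt F E k).Nodup :=
  ((stateAt_sublist_insertedItems_take E k).trans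
    ((List.take_sublist k E).filterMap _)).nodup hnd

theorem stateAt_sublist_append (E : List (Op α)) {m n : ℕ} (h : m ≤ n) :
    (stateAt F E n).Sublist (stateAt F E m ++ insertedItems (E.drop m)) := by
  obtain ⟨t, rfl⟩ := Nat.exists_eq_add_of_le h
  rw [stateAt, List.take_add, List.foldl_append, ← stateAt]
  exact (foldl_applyOp_sublist F _ _).trans
    (((List.take_sublist t _).filterMap _).append_left _)

theorem not_mem_stateAt_of_getElem? {E : List (Op α)} {i : ℕ} {s : α}
    (hnd : (insertedItems E).Nodup) (hi : E[i]? = some (.ins s)) : s ∉ stateAt F E i :=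
  fun hs => not_mem_insertedItems_take_append_drop hnd hi
    (List.mem_append_left _ ((stateAt_sublist_insertedItems_take E i).subset hs))

theorem mem_stateAt_of_le {E : List (Op α)} {i m n : ℕ} {s : α}
    (hnd : (insertedItems E).Nodup) (hi : E[i]? = some (.ins s)) (him : i < m) (hmn : m ≤ n)
    (hs : s ∈ stateAt F E n) : s ∈ stateAt F E m := by
  have hlater : s ∉ insertedItems (E.drop m) := fun h =>
    not_mem_insertedItems_take_append_drop hnd hi
      (List.mem_append_right _ (((E.drop_sublist_drop_left him).filterMap _).subset h))
  exact (List.mem_append.1 ((stateAt_sublist_append E hmn).subset hs)).resolve_right hlater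

theorem ConsistentF.stateAt_eraseIdx_eraseIdx_sub_one (hF : ConsistentF F) {E : List (Op α)}
    {i j : ℕ} {s : α} (hnd : (insertedItems E).Nodup) (hi : E[i]? = some (.ins s))
    (hij : i < j) (hj : j ≤ E.length) (hsj : s ∈ stateAt F E j) (m : ℕ) (him : i < m)
    (hmj : m ≤ j) :
    stateAt F ((E.eraseIdx j).eraseIdx i) (m - 1) = (stateAt F E m).erase s := by
  induction m, him using Nat.le_induction with
  | base =>
    show stateAt F _ i = _
    rw [stateAt_eraseIdx_of_le _ le_rfl, stateAt_eraseIdx_of_le _ hij.le,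
      stateAt_add_one_of_getElem? hi, applyOp,
      List.erase_append_right _ (not_mem_stateAt_of_getElem? hnd hi)]
    simp
  | succ m him ih =>
    obtain ⟨op, hop⟩ : ∃ op, E[m]? = some op :=
      ⟨E[m], List.getElem?_eq_getElem (by omega)⟩
    have hop' : ((E.eraseIdx j).eraseIdx i)[m - 1]? = some op := by
      rw [List.getElem?_eraseIdx_of_ge (by omega), List.getElem?_eraseIdx_of_lt (by omega),
        Nat.sub_add_cancel (by omega), hop]
    have hsm : s ∈ stateAt F E m := mem_stateAt_of_le hnd hi him (by omega) hsj
    have hsm' : s ∈ applyOp F (stateAt F E m) op := by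
      rw [← stateAt_add_one_of_getElem? hop]
      exact mem_stateAt_of_le hnd hi (by omega) hmj hsj
    have hops : op ≠ .ins s := by
      rintro rfl
      have hnd' := nodup_stateAt (F := F) hnd (m + 1)
      rw [stateAt_add_one_of_getElem? hop, applyOp, List.nodup_append] at hnd'
      exact hnd'.2.2 s hsm s (List.mem_singleton_self s) rfl
    calc stateAt F ((E.eraseIdx j).eraseIdx i) (m + 1 - 1)
        = applyOp F (stateAt F ((E.eraseIdx j).eraseIdx i) (m - 1)) op := by
          rw [← stateAt_add_one_of_getElem? hop', Nat.sub_add_cancel (by omega),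
            Nat.add_sub_cancel]
      _ = applyOp F ((stateAt F E m).erase s) op := by rw [ih (by omega)]
      _ = (stateAt F E (m + 1)).erase s := by
          rw [hF.applyOp_erase (nodup_stateAt hnd m) hops hsm', stateAt_add_one_of_getElem? hop]

end Execution

theorem stmt8_general {α : Type*} [DecidableEq α] (F : List α → Option α) (hF : ConsistentF F)
    (E : List (Op α)) (hnd : (insertedItems E).Nodup)
    (i j : ℕ) (hij : i < j)
    (s : α) (hi : E[i]? = some (Op.ins s)) (hjrem : E[j]? = some Op.rem)
    (hret : F (stateAt F E j) = some s)
    (E' : List (Op α)) (hE' : E' = (E.eraseIdx j).eraseIdx i) :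
    ∀ k, k < E.length → k ≠ i → k ≠ j → E[k]? = some Op.rem →
      F (stateAt F E' (if k < i then k else if k < j then k - 1 else k - 2)) =
        F (stateAt F E k) := by
  intro k _ hki hkj hkrem
  subst hE'
  have hj : j < E.length := (List.getElem?_eq_some_iff.1 hjrem).1
  have hsj : s ∈ stateAt F E j := hF.mem_of_eq_some (nodup_stateAt hnd j) hret
  have hmid := hF.stateAt_eraseIdx_eraseIdx_sub_one hnd hi hij hj.le hsj
  split_ifs with hki' hkj'
  · rw [stateAt_eraseIdx_of_le _ hki'.le, stateAt_eraseIdx_of_le _ (hki'.trans hij).le]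
  · have hsk : s ∈ applyOp F (stateAt F E k) .rem := by
      rw [← stateAt_add_one_of_getElem? hkrem]
      exact mem_stateAt_of_le hnd hi (by omega) hkj' hsj
    have hnodup := nodup_stateAt (F := F) hnd k
    rw [hmid k (by omega) hkj'.le, hF.apply_erase hnodup (apply_ne_of_mem_applyOp_rem hnodup hsk)]
  · have hjoin : stateAt F ((E.eraseIdx j).eraseIdx i) (j - 1) = stateAt F E (j + 1) := by
      rw [hmid j hij le_rfl, stateAt_add_one_of_getElem? hjrem]
      simp [applyOp, hret]
    obtain ⟨t, rfl⟩ : ∃ t, k = j + 1 + t := ⟨k - (j + 1), by omega⟩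
    rw [show j + 1 + t - 2 = j - 1 + t by omega,
      stateAt_add_eq_of_drop_eq hjoin (drop_eraseIdx_eraseIdx E hij) t]

theorem stmt8 {α : Type*} [DecidableEq α] (F : List α → Option α) (hF : ConsistentF F)
    (E : List (Op α)) (hnd : (insertedItems E).Nodup)
    (i j : ℕ) (hij : i < j) (hj : j < E.length)
    (s : α) (hi : E[i]? = some (Op.ins s)) (hjrem : E[j]? = some Op.rem)
    (hret : F (stateAt F E j) = some s)
    (E' : List (Op α)) (hE' : E' = (E.eraseIdx j).eraseIdx i) :
    ∀ k, k < E.length → k ≠ i → k ≠ j → E[k]? = some Op.rem →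
      F (stateAt F E' (if k < i then k else if k < j then k - 1 else k - 2)) =
        F (stateAt F E k) :=
  stmt8_general F hF E hnd i j hij s hi hjrem hret E' hE'
end

section
/- Barrier propagation: for pairwise distinct items b, g, s, r, if F [b, g] = b, F [b, r] = r, and (F [g, s] = g or F [s, g] = g), then F [s, r] = r. -/
theorem stmt15 {α : Type*} (F : List α → Option α) (hF : ConsistentF F)
    (b g s r : α)
    (hbg : b ≠ g) (hbs : b ≠ s) (hbr : b ≠ r) (hgs : g ≠ s) (hgr : g ≠ r) (hsr : s ≠ r)
    (h1 : F [b, g] = some b) (h2 : F [b, r] = some r)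
    (h3 : F [g, s] = some g ∨ F [s, g] = some g) :
    F [s, r] = some r := by
  have nd_sr : ([s, r] : List α).Nodup := by simp [hsr]
  have nd_bg : ([b, g] : List α).Nodup := by simp [hbg]
  have nd_br : ([b, r] : List α).Nodup := by simp [hbr]
  have nd_gs : ([g, s] : List α).Nodup := by simp [hgs]
  have nd_sg : ([s, g] : List α).Nodup := by simp [hgs.symm]
  rcases h3 with h3 | h3
  · set L : List α := [b, g, s, r] with hLdef
    have ndL : L.Nodup := by
      simp [hLdef, hbg, hbs, hbr, hgs, hgr, hsr]
    have hmem := hF.mem L ndL (by simp [hLdef])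
    obtain ⟨x, hxL, hFx⟩ := hmem
    -- b before r in L, b before g in L, g before s in L, s before r in L
    have hbrL : Before b r L := ⟨[], [g, s], [], rfl⟩
    have hbgL : Before b g L := ⟨[], [], [s, r], rfl⟩
    have hgsL : Before g s L := ⟨[b], [], [r], rfl⟩
    have hsrL : Before s r L := ⟨[b, g], [], [], rfl⟩
    have hxr : x = r := by
      simp only [hLdef] at hxL; simp at hxL
      rcases hxL with h | h | h | h <;> rw [h] at hFx
      · exact absurd h2 (hF.cons L [b, r] ndL nd_br b r hbr hbrL hFx ⟨[], [], [], rfl⟩)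
      · exact absurd hFx (hF.cons [b, g] L nd_bg ndL b g hbg ⟨[], [], [], rfl⟩ h1 hbgL)
      · exact absurd hFx (hF.cons [g, s] L nd_gs ndL g s hgs ⟨[], [], [], rfl⟩ h3 hgsL)
      · exact h
    rw [hxr] at hFx
    obtain ⟨y, hyL, hFy⟩ := hF.mem [s, r] nd_sr (by simp)
    simp at hyL
    rcases hyL with h | h <;> rw [h] at hFy
    · exact absurd hFx (hF.cons [s, r] L nd_sr ndL s r hsr ⟨[], [], [], rfl⟩ hFy hsrL)
    · exact hFy
  · set L : List α := [b, s, g, r] with hLdef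
    have ndL : L.Nodup := by
      simp [hLdef, hbg, hbs, hbr, hgs.symm, hgr, hsr]
    obtain ⟨x, hxL, hFx⟩ := hF.mem L ndL (by simp [hLdef])
    have hbrL : Before b r L := ⟨[], [s, g], [], rfl⟩
    have hbgL : Before b g L := ⟨[], [s], [r], rfl⟩
    have hsgL : Before s g L := ⟨[b], [], [r], rfl⟩
    have hsrL : Before s r L := ⟨[b], [g], [], rfl⟩
    have hxr : x = r := by
      simp only [hLdef] at hxL; simp at hxL
      rcases hxL with h | h | h | h <;> rw [h] at hFx
      · exact absurd h2 (hF.cons L [b, r] ndL nd_br b r hbr hbrL hFx ⟨[], [], [], rfl⟩)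
      · exact absurd h3 (hF.cons L [s, g] ndL nd_sg s g hgs.symm hsgL hFx ⟨[], [], [], rfl⟩)
      · exact absurd hFx (hF.cons [b, g] L nd_bg ndL b g hbg ⟨[], [], [], rfl⟩ h1 hbgL)
      · exact h
    rw [hxr] at hFx
    obtain ⟨y, hyL, hFy⟩ := hF.mem [s, r] nd_sr (by simp)
    simp at hyL
    rcases hyL with h | h <;> rw [h] at hFy
    · exact absurd hFx (hF.cons [s, r] L nd_sr ndL s r hsr ⟨[], [], [], rfl⟩ hFy hsrL)
    · exact hFy
end
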